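/- Let Ω ⊂ ℝⁿ (n ≥ 2) be a bounded convex domain with inradius r, σ ≥ 3/2, τ > 0, and Λ ≥ π²/(4r²). Then the eigenvalue counting function satisfies N(Λ) ≤ L^cl_{σ,n} |Ω| ((1+τ)^{σ+n/2}/τ^σ) Λ^{n/2} − C(σ,n) L^cl_{σ,n−1} |∂Ω| ((1+τ)^{σ+(n−1)/2}/τ^σ) Λ^{(n−1)/2}, where C(σ,n) is the constant of the improved Berezin inequality for convex domains. In particular, for σ = 3/2: N(Λ) ≤ L^cl_{3/2,n} |Ω| ((1+τ)^{(n+3)/2}/τ^{3/2}) Λ^{n/2} − C(3/2,n) L^cl_{3/2,n−1} |∂Ω| ((1+τ)^{1+n/2}/τ^{3/2}) Λ^{(n−1)/2}. -/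

import Mathlib

set_option maxHeartbeats 1000000


open MeasureTheory Real Filter RealInnerProductSpace

noncomputable section

variable {E : Type*} [NormedAddCommGroup E] [NormedSpace ℝ E] [MeasureSpace E]

/-- The Rayleigh quotient of a test function. -/
def rayleighQuotient (f : E → ℝ) : ℝ :=
  (∫ x, ‖fderiv ℝ f x‖ ^ 2) / ∫ x, (f x) ^ 2

/-- The `k`-th Dirichlet eigenvalue of `-Δ` on `Ω` (indexed from `k = 0`, so that
`dirichletEigenvalue Ω 0 = λ₁(Ω)`), defined via the Courant–Fischer min–max principle over
smooth compactly supported test functions supported in `Ω` (a form core for `H¹₀(Ω)`). -/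
def dirichletEigenvalue (Ω : Set E) (k : ℕ) : ℝ :=
  sInf { c : ℝ | ∃ V : Submodule ℝ (E → ℝ), Module.finrank ℝ V = k + 1 ∧
    (∀ f ∈ V, ContDiff ℝ (⊤ : ℕ∞) f ∧ HasCompactSupport f ∧ tsupport f ⊆ Ω) ∧
    ∀ f ∈ V, f ≠ 0 → rayleighQuotient f ≤ c }

/-- The Riesz mean `Tr(-Δ_Ω - Λ)₋^σ = Σ_k (Λ - λ_k(Ω))₊^σ`. -/
def rieszMean (σ : ℝ) (Ω : Set E) (Λ : ℝ) : ℝ :=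
  ∑' k : ℕ, (max (Λ - dirichletEigenvalue Ω k) 0) ^ σ

/-- The semiclassical Lieb–Thirring constant `L^cl_{σ,m}`. -/
def LTconst (σ : ℝ) (m : ℕ) : ℝ :=
  Real.Gamma (σ + 1) / ((4 * π) ^ ((m : ℝ) / 2) * Real.Gamma (σ + 1 + (m : ℝ) / 2))

/-- The inradius `r = sup_{x ∈ Ω} dist(x, ∂Ω)`. -/
def inradius (Ω : Set E) : ℝ := ⨆ x ∈ Ω, Metric.infDist x (frontier Ω)

/-- The inner parallel set `Ω_t = {x ∈ Ω : dist(x, Ωᶜ) ≥ t}`. -/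
def innerParallel (Ω : Set E) (t : ℝ) : Set E := {x ∈ Ω | t ≤ Metric.infDist x Ωᶜ}

/-- `m`-dimensional surface measure (Hausdorff measure). -/
def surfaceArea [BorelSpace E] (m : ℕ) (S : Set E) : ℝ := (μH[(m : ℝ)] S).toReal


/-- The eigenvalue counting function `N(Λ) = #{k : λ_k(Ω) < Λ}`. -/
def countingFunction (Ω : Set E) (Λ : ℝ) : ℕ :=
  Set.ncard {k : ℕ | dirichletEigenvalue Ω k < Λ}

/-- Cauchy-Schwarz / variance: the square of the mean is at most the mean of the square,
on `Ioc 0 1`. -/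
lemma sq_setIntegral_le (u : ℝ → ℝ) (hu : Continuous u) :
    (∫ t in Set.Ioc (0:ℝ) 1, u t) ^ 2 ≤ ∫ t in Set.Ioc (0:ℝ) 1, (u t) ^ 2 := by
  have hι : IntegrableOn u (Set.Ioc (0:ℝ) 1) := hu.integrableOn_Ioc
  have hι2 : IntegrableOn (fun t => (u t) ^ 2) (Set.Ioc (0:ℝ) 1) :=
    (hu.pow 2).integrableOn_Ioc
  set m := ∫ t in Set.Ioc (0:ℝ) 1, u t with hm
  have hvol : (volume.restrict (Set.Ioc (0:ℝ) 1)) Set.univ = 1 := by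
    simp [Real.volume_Ioc]
  have key : 0 ≤ ∫ t in Set.Ioc (0:ℝ) 1, (u t - m) ^ 2 :=
    integral_nonneg fun t => sq_nonneg _
  have expand : ∫ t in Set.Ioc (0:ℝ) 1, (u t - m) ^ 2
      = (∫ t in Set.Ioc (0:ℝ) 1, (u t) ^ 2) - m ^ 2 := by
    have h1 : ∀ t : ℝ, (u t - m) ^ 2 = (u t) ^ 2 - (2 * m) * u t + m ^ 2 := by
      intro t; ring
    calc ∫ t in Set.Ioc (0:ℝ) 1, (u t - m) ^ 2
        = ∫ t in Set.Ioc (0:ℝ) 1, ((u t) ^ 2 - (2 * m) * u t + m ^ 2) := by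
          apply integral_congr_ae; filter_upwards with t using h1 t
      _ = (∫ t in Set.Ioc (0:ℝ) 1, ((u t) ^ 2 - (2 * m) * u t)) + ∫ t in Set.Ioc (0:ℝ) 1, (m:ℝ)^2 := by
          exact integral_add (hι2.sub (hι.const_mul (2*m)))
            (integrableOn_const (by simp [Real.volume_Ioc]))
      _ = (∫ t in Set.Ioc (0:ℝ) 1, (u t) ^ 2) - (2*m) * (∫ t in Set.Ioc (0:ℝ) 1, u t) + m^2 := by
          rw [integral_sub hι2 (hι.const_mul (2*m)), integral_const_mul, setIntegral_const]
          have h4 : volume.real (Set.Ioc (0:ℝ) 1) = 1 := by simp [measureReal_def, Real.volume_Ioc]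
          rw [h4]; simp only [smul_eq_mul]; ring
      _ = (∫ t in Set.Ioc (0:ℝ) 1, (u t) ^ 2) - m ^ 2 := by rw [← hm]; ring
  nlinarith [key, expand]

/-- FTC + Cauchy-Schwarz pointwise bound. -/
lemma sq_sub_le_norm_fderiv {X : Type*} [NormedAddCommGroup X] [NormedSpace ℝ X]
    (f : X → ℝ) (hf : ContDiff ℝ (⊤ : ℕ∞) f) (x v : X) :
    (f (x + v) - f x) ^ 2 ≤ ‖v‖ ^ 2 * ∫ t in Set.Ioc (0:ℝ) 1, ‖fderiv ℝ f (x + t • v)‖ ^ 2 := by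
  set L : ℝ → ℝ := fun t => fderiv ℝ f (x + t • v) v with hL
  have hfd : Differentiable ℝ f := hf.differentiable (by simp)
  have hder : ∀ t : ℝ, HasDerivAt (fun s : ℝ => f (x + s • v)) (L t) t := by
    intro t
    have h1 : HasDerivAt (fun s : ℝ => x + s • v) v t := by
      simpa using ((hasDerivAt_id t).smul_const v).const_add x
    exact (hfd (x + t • v)).hasFDerivAt.comp_hasDerivAt t h1
  have hcontfd : Continuous (fun y => fderiv ℝ f y) := (hf.continuous_fderiv (by simp))
  have hcontL : Continuous L := by
    have : Continuous (fun t : ℝ => fderiv ℝ f (x + t • v)) :=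
      hcontfd.comp (by continuity)
    exact (ContinuousLinearMap.apply ℝ ℝ v).continuous.comp this
  have hint : ∫ t in (0:ℝ)..1, L t = f (x + v) - f x := by
    have := intervalIntegral.integral_eq_sub_of_hasDerivAt
      (f := fun s : ℝ => f (x + s • v)) (f' := L)
      (fun t _ => hder t) (hcontL.intervalIntegrable 0 1)
    simpa using this
  have h2 : ∫ t in (0:ℝ)..1, L t = ∫ t in Set.Ioc (0:ℝ) 1, L t :=
    intervalIntegral.integral_of_le zero_le_one
  have hCS : (∫ t in Set.Ioc (0:ℝ) 1, L t) ^ 2 ≤ ∫ t in Set.Ioc (0:ℝ) 1, (L t) ^ 2 :=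
    sq_setIntegral_le L hcontL
  have hptw : ∀ t : ℝ, (L t) ^ 2 ≤ ‖fderiv ℝ f (x + t • v)‖ ^ 2 * ‖v‖ ^ 2 := by
    intro t
    have h3 : |L t| ≤ ‖fderiv ℝ f (x + t • v)‖ * ‖v‖ := by
      simpa using (fderiv ℝ f (x + t • v)).le_opNorm v
    calc (L t) ^ 2 = |L t| ^ 2 := (sq_abs _).symm
    _ ≤ (‖fderiv ℝ f (x + t • v)‖ * ‖v‖) ^ 2 := by
        apply pow_le_pow_left₀ (abs_nonneg _) h3
    _ = ‖fderiv ℝ f (x + t • v)‖ ^ 2 * ‖v‖ ^ 2 := by ring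
  have hmono : ∫ t in Set.Ioc (0:ℝ) 1, (L t) ^ 2
      ≤ ∫ t in Set.Ioc (0:ℝ) 1, ‖fderiv ℝ f (x + t • v)‖ ^ 2 * ‖v‖ ^ 2 := by
    apply setIntegral_mono ((hcontL.pow 2).integrableOn_Ioc)
    · exact ((((hcontfd.comp (by continuity : Continuous fun t : ℝ => x + t • v)).norm.pow 2).mul
        continuous_const).integrableOn_Ioc)
    · exact hptw
  calc (f (x + v) - f x) ^ 2 = (∫ t in Set.Ioc (0:ℝ) 1, L t) ^ 2 := by rw [← hint, h2]
  _ ≤ ∫ t in Set.Ioc (0:ℝ) 1, (L t) ^ 2 := hCS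
  _ ≤ ∫ t in Set.Ioc (0:ℝ) 1, ‖fderiv ℝ f (x + t • v)‖ ^ 2 * ‖v‖ ^ 2 := hmono
  _ = ‖v‖ ^ 2 * ∫ t in Set.Ioc (0:ℝ) 1, ‖fderiv ℝ f (x + t • v)‖ ^ 2 := by
      rw [mul_comm, ← integral_mul_const]

section Cells
variable {n : ℕ}

def gridCell (h : ℝ) (i : Fin n → ℤ) : Set (EuclideanSpace ℝ (Fin n)) :=
  {x | ∀ j, (i j : ℝ) * h ≤ x j ∧ x j < ((i j : ℝ) + 1) * h}

lemma gridCell_eq_preimage (h : ℝ) (i : Fin n → ℤ) :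
    gridCell h i = (MeasurableEquiv.toLp 2 (Fin n → ℝ)).symm ⁻¹'
      (Set.univ.pi fun j => Set.Ico ((i j : ℝ) * h) (((i j : ℝ) + 1) * h)) := by
  ext x
  simp [gridCell, Set.mem_pi]

lemma measurableSet_gridCell (h : ℝ) (i : Fin n → ℤ) : MeasurableSet (gridCell h i) := by
  rw [gridCell_eq_preimage]
  exact (MeasurableEquiv.toLp 2 (Fin n → ℝ)).symm.measurable
    (MeasurableSet.univ_pi fun j => measurableSet_Ico)

lemma volume_gridCell (h : ℝ) (hh : 0 ≤ h) (i : Fin n → ℤ) :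
    volume (gridCell h i) = ENNReal.ofReal (h ^ n) := by
  rw [gridCell_eq_preimage,
    (EuclideanSpace.volume_preserving_symm_measurableEquiv_toLp (Fin n)).measure_preimage
      ((MeasurableSet.univ_pi fun j => measurableSet_Ico).nullMeasurableSet),
    volume_pi_pi]
  simp only [Real.volume_Ico]
  have : ∀ j : Fin n, ENNReal.ofReal (((i j : ℝ) + 1) * h - (i j : ℝ) * h)
      = ENNReal.ofReal h := by intro j; congr 1; ring
  rw [Finset.prod_congr rfl (fun j _ => this j), Finset.prod_const]
  simp [ENNReal.ofReal_pow hh]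

lemma mem_gridCell_floor {h : ℝ} (hh : 0 < h) (x : EuclideanSpace ℝ (Fin n)) :
    x ∈ gridCell h (fun j => ⌊x j / h⌋) := by
  intro j
  constructor
  · rw [← le_div_iff₀ hh]; exact Int.floor_le _
  · rw [← div_lt_iff₀ hh]; exact Int.lt_floor_add_one _

lemma gridCell_idx_eq {h : ℝ} (hh : 0 < h) {x : EuclideanSpace ℝ (Fin n)} {i : Fin n → ℤ}
    (hx : x ∈ gridCell h i) : i = fun j => ⌊x j / h⌋ := by
  funext j
  obtain ⟨h1, h2⟩ := hx j
  rw [eq_comm, Int.floor_eq_iff]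
  exact ⟨(le_div_iff₀ hh).2 h1, (div_lt_iff₀ hh).2 h2⟩

lemma gridCell_disjoint {h : ℝ} (hh : 0 < h) {i i' : Fin n → ℤ} (hne : i ≠ i') :
    Disjoint (gridCell h i) (gridCell h i') := by
  rw [Set.disjoint_left]
  intro x hx hx'
  exact hne ((gridCell_idx_eq hh hx).trans (gridCell_idx_eq hh hx').symm)

lemma abs_coord_le_norm (x : EuclideanSpace ℝ (Fin n)) (j : Fin n) : |x j| ≤ ‖x‖ := by
  rw [EuclideanSpace.norm_eq]
  have h1 : |x j| ^ 2 ≤ ∑ k, ‖x k‖ ^ 2 := by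
    rw [sq_abs]
    exact Finset.single_le_sum (f := fun k => ‖x k‖ ^ 2) (fun k _ => by positivity)
      (Finset.mem_univ j) |>.trans_eq' (by simp [Real.norm_eq_abs, sq_abs])
  calc |x j| = Real.sqrt (|x j| ^ 2) := by rw [Real.sqrt_sq (abs_nonneg _)]
  _ ≤ Real.sqrt (∑ k, ‖x k‖ ^ 2) := Real.sqrt_le_sqrt h1
  _ = _ := rfl

lemma norm_sub_le_of_mem_gridCell {h : ℝ} (hh : 0 < h) {i : Fin n → ℤ}
    {x y : EuclideanSpace ℝ (Fin n)} (hx : x ∈ gridCell h i) (hy : y ∈ gridCell h i) :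
    ‖x - y‖ ≤ h * Real.sqrt n := by
  rw [EuclideanSpace.norm_eq]
  have hcoord : ∀ j, ‖(x - y) j‖ ^ 2 ≤ h ^ 2 := by
    intro j
    obtain ⟨a1, a2⟩ := hx j
    obtain ⟨b1, b2⟩ := hy j
    have : |x j - y j| ≤ h := by
      rw [abs_le]; constructor <;> nlinarith
    have h2 : (x - y) j = x j - y j := rfl
    rw [h2, Real.norm_eq_abs]
    exact pow_le_pow_left₀ (abs_nonneg _) this 2
  calc Real.sqrt (∑ j, ‖(x - y) j‖ ^ 2) ≤ Real.sqrt (∑ _j : Fin n, h ^ 2) :=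
        Real.sqrt_le_sqrt (Finset.sum_le_sum fun j _ => hcoord j)
  _ = Real.sqrt ((n : ℝ) * h ^ 2) := by rw [Finset.sum_const]; simp [mul_comm]
  _ = h * Real.sqrt n := by
      rw [Real.sqrt_mul (by positivity), Real.sqrt_sq hh.le, mul_comm]

end Cells

section StepA
variable {n : ℕ}
local notation "X" => EuclideanSpace ℝ (Fin n)

lemma lintegral_sq_shift_le (f : X → ℝ) (hsm : ContDiff ℝ (⊤ : ℕ∞) f) (hcs : HasCompactSupport f)
    (v : X) :
    ∫⁻ x : X, ENNReal.ofReal ((f (x + v) - f x) ^ 2)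
      ≤ ENNReal.ofReal (‖v‖ ^ 2 * ∫ x : X, ‖fderiv ℝ f x‖ ^ 2) := by
  set Dgrad := ∫ x : X, ‖fderiv ℝ f x‖ ^ 2 with hDgrad
  have hcontfd : Continuous fun y : X => fderiv ℝ f y := hsm.continuous_fderiv (by simp)
  have hgradcs : HasCompactSupport fun x : X => ‖fderiv ℝ f x‖ ^ 2 := by
    have h1 : HasCompactSupport (fderiv ℝ f) := hcs.fderiv ℝ
    exact h1.comp_left (g := fun L : X →L[ℝ] ℝ => ‖L‖ ^ 2) (by simp)
  have hgradint : Integrable (fun x : X => ‖fderiv ℝ f x‖ ^ 2) :=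
    (hcontfd.norm.pow 2).integrable_of_hasCompactSupport hgradcs
  -- pointwise bound
  have step1 : ∫⁻ x : X, ENNReal.ofReal ((f (x + v) - f x) ^ 2)
      ≤ ∫⁻ x : X, ENNReal.ofReal (‖v‖ ^ 2) *
          ENNReal.ofReal (∫ t in Set.Ioc (0:ℝ) 1, ‖fderiv ℝ f (x + t • v)‖ ^ 2) := by
    apply lintegral_mono
    intro x
    calc ENNReal.ofReal ((f (x + v) - f x) ^ 2)
        ≤ ENNReal.ofReal (‖v‖ ^ 2 * ∫ t in Set.Ioc (0:ℝ) 1, ‖fderiv ℝ f (x + t • v)‖ ^ 2) :=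
          ENNReal.ofReal_le_ofReal (sq_sub_le_norm_fderiv f hsm x v)
      _ = _ := ENNReal.ofReal_mul (by positivity)
  rw [lintegral_const_mul' _ _ ENNReal.ofReal_ne_top] at step1
  -- convert inner integral to lintegral and swap
  have step2 : ∀ x : X, ENNReal.ofReal (∫ t in Set.Ioc (0:ℝ) 1, ‖fderiv ℝ f (x + t • v)‖ ^ 2)
      = ∫⁻ t in Set.Ioc (0:ℝ) 1, ENNReal.ofReal (‖fderiv ℝ f (x + t • v)‖ ^ 2) := by
    intro x
    apply ofReal_integral_eq_lintegral_ofReal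
    · exact ((hcontfd.comp ((continuous_const.add (continuous_id.smul continuous_const)) :
        Continuous fun t : ℝ => x + t • v)).norm.pow 2).integrableOn_Ioc
    · filter_upwards with t using by positivity
  have hunc : AEMeasurable (Function.uncurry fun (x : X) (t : ℝ) =>
      ENNReal.ofReal (‖fderiv ℝ f (x + t • v)‖ ^ 2))
      (volume.prod (volume.restrict (Set.Ioc (0:ℝ) 1))) := by
    apply Measurable.aemeasurable
    apply (ENNReal.continuous_ofReal.comp ?_).measurable
    exact (hcontfd.comp ((continuous_fst.add (continuous_snd.smul continuous_const)) :
      Continuous fun p : X × ℝ => p.1 + p.2 • v)).norm.pow 2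
  have step3 : ∫⁻ x : X, ∫⁻ t in Set.Ioc (0:ℝ) 1, ENNReal.ofReal (‖fderiv ℝ f (x + t • v)‖ ^ 2)
      = ∫⁻ t in Set.Ioc (0:ℝ) 1, ∫⁻ x : X, ENNReal.ofReal (‖fderiv ℝ f (x + t • v)‖ ^ 2) :=
    lintegral_lintegral_swap hunc
  have step4 : ∀ t : ℝ, ∫⁻ x : X, ENNReal.ofReal (‖fderiv ℝ f (x + t • v)‖ ^ 2)
      = ENNReal.ofReal Dgrad := by
    intro t
    rw [lintegral_add_right_eq_self (fun y : X => ENNReal.ofReal (‖fderiv ℝ f y‖ ^ 2)) (t • v)]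
    rw [ofReal_integral_eq_lintegral_ofReal hgradint (by filter_upwards with y using by positivity)]
  calc ∫⁻ x : X, ENNReal.ofReal ((f (x + v) - f x) ^ 2)
      ≤ ENNReal.ofReal (‖v‖ ^ 2) *
        ∫⁻ x : X, ENNReal.ofReal (∫ t in Set.Ioc (0:ℝ) 1, ‖fderiv ℝ f (x + t • v)‖ ^ 2) := step1
  _ = ENNReal.ofReal (‖v‖ ^ 2) *
        ∫⁻ t in Set.Ioc (0:ℝ) 1, ∫⁻ x : X, ENNReal.ofReal (‖fderiv ℝ f (x + t • v)‖ ^ 2) := by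
      rw [← step3]; congr 1; apply lintegral_congr; intro x; rw [step2]
  _ = ENNReal.ofReal (‖v‖ ^ 2) * ∫⁻ _t in Set.Ioc (0:ℝ) 1, ENNReal.ofReal Dgrad := by
      congr 1; apply lintegral_congr; intro t; rw [step4]
  _ = ENNReal.ofReal (‖v‖ ^ 2) * ENNReal.ofReal Dgrad := by
      rw [setLIntegral_const]
      simp [Real.volume_Ioc]
  _ = ENNReal.ofReal (‖v‖ ^ 2 * Dgrad) := by
      rw [ENNReal.ofReal_mul (by positivity)]

end StepA

section PerCell
variable {n : ℕ}
local notation "X" => EuclideanSpace ℝ (Fin n)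

lemma percell_identity (f : X → ℝ) (hint : Integrable f (volume : Measure X))
    (hint2 : Integrable (fun x : X => f x * f x) (volume : Measure X))
    {Q : Set X} (_hQm : MeasurableSet Q) {c : ℝ} (hc : 0 ≤ c)
    (hQvol : volume Q = ENNReal.ofReal c)
    (hmean : ∫ x in Q, f x = 0) :
    ENNReal.ofReal (2 * c * ∫ x in Q, f x * f x)
      = ∫⁻ p in Q ×ˢ Q, ENNReal.ofReal ((f p.1 - f p.2) ^ 2) := by
  set μ := (volume : Measure X).restrict Q with hμ
  haveI : IsFiniteMeasure μ := ⟨by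
    rw [hμ, Measure.restrict_apply_univ, hQvol]; exact ENNReal.ofReal_lt_top⟩
  have hμuniv : (μ Set.univ).toReal = c := by
    rw [hμ, Measure.restrict_apply_univ, hQvol, ENNReal.toReal_ofReal hc]
  have hf1 : Integrable f μ := hint.restrict
  have hff : Integrable (fun x : X => f x * f x) μ := hint2.restrict
  have expand : (fun p : X × X => (f p.1 - f p.2) ^ 2)
      = fun p : X × X => ((fun x : X => f x * f x) p.1 * (fun _ : X => (1:ℝ)) p.2
          - (fun x : X => 2 * f x) p.1 * (fun y : X => f y) p.2)
          + (fun _ : X => (1:ℝ)) p.1 * (fun y : X => f y * f y) p.2 := by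
    funext p; simp only; ring
  have i1 : Integrable (fun p : X × X =>
      (fun x : X => f x * f x) p.1 * (fun _ : X => (1:ℝ)) p.2) (μ.prod μ) :=
    hff.mul_prod (integrable_const 1)
  have i2 : Integrable (fun p : X × X =>
      (fun x : X => 2 * f x) p.1 * (fun y : X => f y) p.2) (μ.prod μ) :=
    (hf1.const_mul 2).mul_prod hf1
  have i3 : Integrable (fun p : X × X =>
      (fun _ : X => (1:ℝ)) p.1 * (fun y : X => f y * f y) p.2) (μ.prod μ) :=
    (integrable_const (1:ℝ)).mul_prod hff
  have i12 : Integrable (fun p : X × X =>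
      (fun x : X => f x * f x) p.1 * (fun _ : X => (1:ℝ)) p.2
        - (fun x : X => 2 * f x) p.1 * (fun y : X => f y) p.2) (μ.prod μ) := i1.sub i2
  have hJint : Integrable (fun p : X × X => (f p.1 - f p.2) ^ 2) (μ.prod μ) := by
    rw [expand]; exact i12.add i3
  have hμint : ∫ x, f x ∂μ = 0 := hmean
  have hJ : ∫ p, (f p.1 - f p.2) ^ 2 ∂(μ.prod μ) = 2 * c * ∫ x in Q, f x * f x := by
    have a1 : ∫ p : X × X, (fun x : X => f x * f x) p.1 * (fun _ : X => (1:ℝ)) p.2 ∂(μ.prod μ)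
        = (∫ x, f x * f x ∂μ) * ∫ _x, (1:ℝ) ∂μ :=
      integral_prod_mul (μ := μ) (ν := μ) (fun x : X => f x * f x) (fun _ : X => (1:ℝ))
    have a2 : ∫ p : X × X, (fun x : X => 2 * f x) p.1 * (fun y : X => f y) p.2 ∂(μ.prod μ)
        = (∫ x, 2 * f x ∂μ) * ∫ y, f y ∂μ :=
      integral_prod_mul (μ := μ) (ν := μ) (fun x : X => 2 * f x) (fun y : X => f y)
    have a3 : ∫ p : X × X, (fun _ : X => (1:ℝ)) p.1 * (fun y : X => f y * f y) p.2 ∂(μ.prod μ)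
        = (∫ _x, (1:ℝ) ∂μ) * ∫ y, f y * f y ∂μ :=
      integral_prod_mul (μ := μ) (ν := μ) (fun _ : X => (1:ℝ)) (fun y : X => f y * f y)
    rw [expand, integral_add i12 i3, integral_sub i1 i2, a1, a2, a3]
    rw [hμint]
    simp only [integral_const, smul_eq_mul, mul_one, measureReal_def, hμuniv]
    have : ∫ x, f x * f x ∂μ = ∫ x in Q, f x * f x := rfl
    rw [this]; ring
  rw [← hJ, ofReal_integral_eq_lintegral_ofReal hJint
    (by filter_upwards with p using sq_nonneg _), hμ, Measure.prod_restrict,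
    ← Measure.volume_eq_prod]
end PerCell

section Weyl
variable {n : ℕ}
local notation "X" => EuclideanSpace ℝ (Fin n)

lemma weyl_dim_bound (hn : 1 ≤ n) (M R : ℝ) (hM : 0 < M) (hR : 0 < R) :
    ∃ K : ℕ, ∀ V : Submodule ℝ (EuclideanSpace ℝ (Fin n) → ℝ),
      (∀ f ∈ V, ContDiff ℝ (⊤ : ℕ∞) f ∧ HasCompactSupport f ∧
        tsupport f ⊆ Metric.closedBall 0 R) →
      (∀ f ∈ V, (∫ x, ‖fderiv ℝ f x‖ ^ 2) ≤ M * ∫ x, f x * f x) →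
      Module.finrank ℝ V ≤ K := by
  have hn0 : (0:ℝ) < n := by exact_mod_cast hn
  set A : ℝ := n * 2 ^ n * (Real.sqrt n) ^ n * M with hA_def
  have hsqn : (0:ℝ) < Real.sqrt n := Real.sqrt_pos.2 hn0
  have hA : 0 < A := by positivity
  set h : ℝ := Real.sqrt (1 / (2 * A)) with hh_def
  have hh : 0 < h := Real.sqrt_pos.2 (by positivity)
  have hh2 : h ^ 2 = 1 / (2 * A) := Real.sq_sqrt (by positivity)
  set δ : ℝ := h * Real.sqrt n with hδ_def
  have hδ : 0 < δ := by positivity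
  set L0 : ℤ := ⌈R / h⌉ + 1 with hL0
  set Bf : Finset (Fin n → ℤ) := Finset.Icc (fun _ => -L0) (fun _ => L0) with hBf
  refine ⟨Bf.card, ?_⟩
  intro V hreg hray
  by_contra hK
  push_neg at hK
  haveI hfd : FiniteDimensional ℝ V :=
    FiniteDimensional.of_finrank_pos (lt_of_le_of_lt (Nat.zero_le _) hK)
  have hmemInt : ∀ g ∈ V, Integrable g (volume : Measure X) := fun g hg =>
    ((hreg g hg).1.continuous).integrable_of_hasCompactSupport (hreg g hg).2.1
  -- the cell-averaging linear map
  set Φ : V →ₗ[ℝ] (↥Bf → ℝ) :=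
    { toFun := fun u => fun i => ∫ x in gridCell h (i : Fin n → ℤ), (u : X → ℝ) x
      map_add' := by
        intro u w
        funext i
        have hu := hmemInt _ u.2
        have hw := hmemInt _ w.2
        simp only [Submodule.coe_add, Pi.add_apply]
        rw [integral_add hu.integrableOn hw.integrableOn]
      map_smul' := by
        intro c u
        funext i
        simp only [Submodule.coe_smul, Pi.smul_apply, smul_eq_mul, RingHom.id_apply]
        rw [integral_const_mul] } with hΦ
  have hrange : Module.finrank ℝ (LinearMap.range Φ) ≤ Bf.card := by
    have h1 := Submodule.finrank_le (LinearMap.range Φ)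
    rwa [Module.finrank_fintype_fun_eq_card, Fintype.card_coe] at h1
  have hker : LinearMap.ker Φ ≠ ⊥ := by
    intro h0
    have h1 := LinearMap.finrank_range_add_finrank_ker Φ
    rw [h0, finrank_bot, add_zero] at h1
    omega
  obtain ⟨u, huker, hune⟩ := (Submodule.ne_bot_iff _).1 hker
  set f : X → ℝ := (u : X → ℝ) with hf_def
  obtain ⟨hsm, hcs, hsupp⟩ := hreg f u.2
  have hfne : f ≠ 0 := fun hz => hune (Subtype.ext hz)
  have hcont : Continuous f := hsm.continuous
  have hint : Integrable f := hcont.integrable_of_hasCompactSupport hcs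
  have hint2 : Integrable (fun x : X => f x * f x) :=
    (hcont.mul hcont).integrable_of_hasCompactSupport (hcs.mul_right)
  obtain ⟨x₀, hx₀⟩ := Function.ne_iff.1 hfne
  have hIf_pos : 0 < ∫ x : X, f x * f x := by
    apply Continuous.integral_pos_of_hasCompactSupport_nonneg_nonzero (hcont.mul hcont)
      hcs.mul_right (fun x => mul_self_nonneg _)
    exact mul_ne_zero hx₀ hx₀
  set If : ℝ := ∫ x : X, f x * f x with hIf_def
  set Dg : ℝ := ∫ x : X, ‖fderiv ℝ f x‖ ^ 2 with hDg_def
  have hDg_nonneg : 0 ≤ Dg := integral_nonneg fun x => by positivity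
  have hDg : Dg ≤ M * If := hray f u.2
  -- mean zero on the cells of `Bf`
  have hmean : ∀ i ∈ Bf, ∫ x in gridCell h i, f x = 0 := by
    intro i hi
    have h1 : Φ u = 0 := LinearMap.mem_ker.1 huker
    exact congrFun h1 ⟨i, hi⟩
  -- support covered by the cells of `Bf`
  have hcover : ∀ x : X, f x ≠ 0 → (fun j => ⌊x j / h⌋) ∈ Bf := by
    intro x hx
    have hxsupp : x ∈ Metric.closedBall (0:X) R := hsupp (subset_tsupport f hx)
    have hxnorm : ‖x‖ ≤ R := by
      simpa [Metric.mem_closedBall, dist_zero_right] using hxsupp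
    rw [hBf, Finset.mem_Icc]
    constructor
    · intro j
      have h1 : -(R / h) ≤ x j / h := by
        rw [← neg_div]
        have h2 := (abs_coord_le_norm x j).trans hxnorm
        gcongr
        linarith [(abs_le.1 h2).1]
      calc -L0 ≤ -⌈R / h⌉ := by omega
      _ = ⌊-(R / h)⌋ := by rw [Int.floor_neg]
      _ ≤ ⌊x j / h⌋ := Int.floor_le_floor h1
    · intro j
      have h1 : x j / h ≤ R / h := by
        have h2 := (abs_coord_le_norm x j).trans hxnorm
        gcongr
        linarith [(abs_le.1 h2).2]
      calc ⌊x j / h⌋ ≤ ⌊R / h⌋ := Int.floor_le_floor h1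
      _ ≤ ⌈R / h⌉ := Int.floor_le_ceil _
      _ ≤ L0 := by omega
  -- splitting the L² norm over cells
  have hdisj : (↑Bf : Set (Fin n → ℤ)).Pairwise (Function.onFun Disjoint (gridCell h)) :=
    fun i _ i' _ hne => gridCell_disjoint hh hne
  have hIfsplit : If = ∑ i ∈ Bf, ∫ x in gridCell h i, f x * f x := by
    have h0 : ∫ x in ⋃ i ∈ Bf, gridCell h i, f x * f x
        = ∑ i ∈ Bf, ∫ x in gridCell h i, f x * f x :=
      integral_biUnion_finset Bf (fun i _ => measurableSet_gridCell h i) hdisj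
        (fun i _ => hint2.integrableOn)
    rw [← h0, hIf_def]
    rw [setIntegral_eq_integral_of_forall_compl_eq_zero]
    intro x hx
    by_contra hne
    have hfx : f x ≠ 0 := fun h' => hne (by rw [h']; ring)
    exact hx (Set.mem_biUnion (hcover x hfx) (mem_gridCell_floor hh x))
  -- the smoothed comparison function
  set G : X → ENNReal := fun x =>
    ∫⁻ v in Metric.closedBall (0:X) δ, ENNReal.ofReal ((f (x + v) - f x) ^ 2) with hG_def
  have huncmeas : Measurable (Function.uncurry fun (x : X) (v : X) =>
      ENNReal.ofReal ((f (x + v) - f x) ^ 2)) := by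
    apply (ENNReal.continuous_ofReal.comp ?_).measurable
    exact ((hcont.comp (continuous_fst.add continuous_snd)).sub
      (hcont.comp continuous_fst)).pow 2
  have hGmeas : Measurable G := huncmeas.lintegral_prod_right
  -- translation identity
  have htrans : ∀ x : X, ∫⁻ y in Metric.closedBall x δ,
      ENNReal.ofReal ((f x - f y) ^ 2) = G x := by
    intro x
    simp only [hG_def]
    rw [← lintegral_indicator (measurableSet_closedBall)
      (fun y => ENNReal.ofReal ((f x - f y) ^ 2))]
    rw [← lintegral_indicator (measurableSet_closedBall)
      (fun v => ENNReal.ofReal ((f (x + v) - f x) ^ 2))]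
    rw [← lintegral_add_right_eq_self
      (fun y => (Metric.closedBall x δ).indicator
        (fun y => ENNReal.ofReal ((f x - f y) ^ 2)) y) x]
    apply lintegral_congr
    intro v
    by_cases hv : v ∈ Metric.closedBall (0:X) δ
    · have hv' : v + x ∈ Metric.closedBall x δ := by
        rw [Metric.mem_closedBall] at hv ⊢
        simpa [dist_eq_norm] using hv
      rw [Set.indicator_of_mem hv', Set.indicator_of_mem hv]
      rw [show x + v = v + x from add_comm x v]
      congr 1
      ring
    · have hv' : v + x ∉ Metric.closedBall x δ := by
        rw [Metric.mem_closedBall] at hv ⊢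
        simpa [dist_eq_norm] using hv
      rw [Set.indicator_of_notMem hv', Set.indicator_of_notMem hv]
  -- per-cell bound
  have cellbound : ∀ i ∈ Bf,
      (∫⁻ p in (gridCell h i) ×ˢ (gridCell h i),
        ENNReal.ofReal ((f p.1 - f p.2) ^ 2))
      ≤ ∫⁻ x in gridCell h i, G x := by
    intro i _
    have hFmeas : AEMeasurable (fun p : X × X => ENNReal.ofReal ((f p.1 - f p.2) ^ 2))
        (((volume : Measure X).restrict (gridCell h i)).prod
          ((volume : Measure X).restrict (gridCell h i))) := by
      apply Measurable.aemeasurable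
      apply (ENNReal.continuous_ofReal.comp ?_).measurable
      exact ((hcont.comp continuous_fst).sub (hcont.comp continuous_snd)).pow 2
    rw [Measure.volume_eq_prod, ← Measure.prod_restrict]
    rw [lintegral_prod _ hFmeas]
    apply setLIntegral_mono hGmeas
    intro x hxQ
    calc ∫⁻ y in gridCell h i, ENNReal.ofReal ((f x - f y) ^ 2)
        ≤ ∫⁻ y in Metric.closedBall x δ, ENNReal.ofReal ((f x - f y) ^ 2) := by
          apply lintegral_mono'
          · apply Measure.restrict_mono _ le_rfl
            intro y hyQ
            rw [Metric.mem_closedBall, dist_comm, dist_eq_norm]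
            exact norm_sub_le_of_mem_gridCell hh hxQ hyQ
          · exact le_rfl
    _ = G x := htrans x
  -- global tail bound
  have swapped : ∫⁻ x : X, G x
      = ∫⁻ v in Metric.closedBall (0:X) δ, ∫⁻ x : X,
          ENNReal.ofReal ((f (x + v) - f x) ^ 2) := by
    simp only [hG_def]
    exact lintegral_lintegral_swap huncmeas.aemeasurable
  have vbound : (∫⁻ v in Metric.closedBall (0:X) δ, ∫⁻ x : X,
      ENNReal.ofReal ((f (x + v) - f x) ^ 2))
      ≤ ∫⁻ _v in Metric.closedBall (0:X) δ, ENNReal.ofReal (δ ^ 2 * (M * If)) := by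
    apply setLIntegral_mono measurable_const
    intro v hv
    calc ∫⁻ x : X, ENNReal.ofReal ((f (x + v) - f x) ^ 2)
        ≤ ENNReal.ofReal (‖v‖ ^ 2 * Dg) := lintegral_sq_shift_le f hsm hcs v
    _ ≤ ENNReal.ofReal (δ ^ 2 * (M * If)) := by
        apply ENNReal.ofReal_le_ofReal
        have hvδ : ‖v‖ ≤ δ := by
          rw [Metric.mem_closedBall, dist_zero_right] at hv; exact hv
        have h1 : ‖v‖ ^ 2 ≤ δ ^ 2 := by nlinarith [norm_nonneg v]
        nlinarith [hDg, hDg_nonneg, sq_nonneg ‖v‖]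
  have volball : volume (Metric.closedBall (0:X) δ) ≤ ENNReal.ofReal ((2 * δ) ^ n) := by
    have hsub : Metric.closedBall (0:X) δ ⊆ (MeasurableEquiv.toLp 2 (Fin n → ℝ)).symm ⁻¹'
        (Set.univ.pi fun _ => Set.Icc (-δ) δ) := by
      intro x hx
      rw [Metric.mem_closedBall, dist_zero_right] at hx
      intro j _
      have := (abs_coord_le_norm x j).trans hx
      exact ⟨(abs_le.1 this).1, (abs_le.1 this).2⟩
    calc volume (Metric.closedBall (0:X) δ)
        ≤ volume ((MeasurableEquiv.toLp 2 (Fin n → ℝ)).symm ⁻¹'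
            (Set.univ.pi fun _ => Set.Icc (-δ) δ)) := measure_mono hsub
    _ = volume (Set.univ.pi fun _ : Fin n => Set.Icc (-δ) δ) :=
        (EuclideanSpace.volume_preserving_symm_measurableEquiv_toLp (Fin n)).measure_preimage
          ((MeasurableSet.univ_pi fun _ => measurableSet_Icc).nullMeasurableSet)
    _ = ENNReal.ofReal ((2 * δ) ^ n) := by
        rw [volume_pi_pi]
        simp only [Real.volume_Icc]
        rw [show δ - (-δ) = 2 * δ by ring, Finset.prod_const, Finset.card_univ,
          Fintype.card_fin, ENNReal.ofReal_pow (by positivity)]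
  -- assemble
  have main : ENNReal.ofReal (2 * h ^ n * If) ≤ ENNReal.ofReal (δ ^ 2 * (M * If) * (2 * δ) ^ n) := by
    calc ENNReal.ofReal (2 * h ^ n * If)
        = ∑ i ∈ Bf, ENNReal.ofReal (2 * h ^ n * ∫ x in gridCell h i, f x * f x) := by
          rw [hIfsplit, Finset.mul_sum, ENNReal.ofReal_sum_of_nonneg]
          intro i _
          have : 0 ≤ ∫ x in gridCell h i, f x * f x :=
            setIntegral_nonneg (measurableSet_gridCell h i) fun x _ => mul_self_nonneg _
          positivity
    _ = ∑ i ∈ Bf, ∫⁻ p in (gridCell h i) ×ˢ (gridCell h i),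
          ENNReal.ofReal ((f p.1 - f p.2) ^ 2) := by
          apply Finset.sum_congr rfl
          intro i hi
          exact percell_identity f hint hint2 (measurableSet_gridCell h i)
            (by positivity) (volume_gridCell h hh.le i) (hmean i hi)
    _ ≤ ∑ i ∈ Bf, ∫⁻ x in gridCell h i, G x := Finset.sum_le_sum cellbound
    _ = ∫⁻ x in ⋃ i ∈ Bf, gridCell h i, G x :=
          (lintegral_biUnion_finset hdisj (fun i _ => measurableSet_gridCell h i) G).symm
    _ ≤ ∫⁻ x : X, G x := setLIntegral_le_lintegral _ _
    _ = ∫⁻ v in Metric.closedBall (0:X) δ, ∫⁻ x : X,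
          ENNReal.ofReal ((f (x + v) - f x) ^ 2) := swapped
    _ ≤ ∫⁻ _v in Metric.closedBall (0:X) δ, ENNReal.ofReal (δ ^ 2 * (M * If)) := vbound
    _ = ENNReal.ofReal (δ ^ 2 * (M * If)) * volume (Metric.closedBall (0:X) δ) :=
          setLIntegral_const _ _
    _ ≤ ENNReal.ofReal (δ ^ 2 * (M * If)) * ENNReal.ofReal ((2 * δ) ^ n) := by
          exact mul_le_mul_right volball _
    _ = ENNReal.ofReal (δ ^ 2 * (M * If) * (2 * δ) ^ n) := by
          rw [← ENNReal.ofReal_mul (by positivity)]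
  have mainreal : 2 * h ^ n * If ≤ δ ^ 2 * (M * If) * (2 * δ) ^ n :=
    (ENNReal.ofReal_le_ofReal_iff (by positivity)).1 main
  -- numerics: δ² (2δ)^n M = h^n, contradiction
  have hcoeff : δ ^ 2 * M * (2 * δ) ^ n = h ^ n / 2 := by
    have e1 : δ ^ 2 = h ^ 2 * n := by
      rw [hδ_def, mul_pow, Real.sq_sqrt hn0.le]
    have e2 : (2 * δ) ^ n = 2 ^ n * h ^ n * (Real.sqrt n) ^ n := by
      rw [hδ_def, show 2 * (h * Real.sqrt n) = 2 * h * Real.sqrt n by ring,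
        mul_pow, mul_pow]
    rw [e1, e2, hh2]
    field_simp
    ring
  have : δ ^ 2 * (M * If) * (2 * δ) ^ n = h ^ n / 2 * If := by
    rw [← hcoeff]; ring
  rw [this] at mainreal
  have hhn : 0 < h ^ n := by positivity
  nlinarith [hIf_pos, hhn, mainreal]

end Weyl


/- --------------------- auxiliary lemmas about the definitions ------------------- -/
section EigenAux
variable {n : ℕ}
local notation "X" => EuclideanSpace ℝ (Fin n)

lemma inradius_pos (hn : 1 ≤ n) (Ω : Set X) (hop : IsOpen Ω)
    (hbd : Bornology.IsBounded Ω) (hne : Ω.Nonempty) : 0 < inradius Ω := by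
  haveI : Nonempty (Fin n) := ⟨⟨0, hn⟩⟩
  obtain ⟨x₀, hx₀⟩ := hne
  -- nonempty frontier
  have hfr : (frontier Ω).Nonempty := by
    rw [Set.nonempty_iff_ne_empty]
    intro hemp
    rcases frontier_eq_empty_iff.1 hemp with h1 | h1
    · exact absurd h1 (Set.nonempty_iff_ne_empty.1 ⟨x₀, hx₀⟩)
    · rw [h1] at hbd
      exact NormedSpace.unbounded_univ ℝ X hbd
  -- x₀ is not on the frontier
  have hx₀fr : x₀ ∉ frontier Ω := by
    intro hc
    rw [frontier, hop.interior_eq] at hc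
    exact hc.2 hx₀
  have hpos : 0 < Metric.infDist x₀ (frontier Ω) :=
    (isClosed_frontier.notMem_iff_infDist_pos hfr).1 hx₀fr
  -- bounded above
  obtain ⟨r, hr⟩ := hbd.subset_closedBall 0
  obtain ⟨z₀, hz₀⟩ := hfr
  have hz₀ball : z₀ ∈ Metric.closedBall (0:X) r := by
    have h1 : frontier Ω ⊆ Metric.closedBall 0 r :=
      (frontier_subset_closure.trans (closure_minimal hr Metric.isClosed_closedBall))
    exact h1 hz₀
  have hBdd : BddAbove (Set.range fun x : X => ⨆ _ : x ∈ Ω, Metric.infDist x (frontier Ω)) := by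
    refine ⟨max (2 * r) 0, ?_⟩
    rintro y ⟨x, rfl⟩
    dsimp only
    by_cases hx : x ∈ Ω
    · haveI : Nonempty (x ∈ Ω) := ⟨hx⟩
      rw [ciSup_const]
      have h1 : Metric.infDist x (frontier Ω) ≤ dist x z₀ := Metric.infDist_le_dist_of_mem hz₀
      have h2 : dist x z₀ ≤ dist x 0 + dist (0:X) z₀ := dist_triangle _ _ _
      have h3 : dist x 0 ≤ r := hr hx
      have h4 : dist (0:X) z₀ ≤ r := by rw [dist_comm]; exact hz₀ball
      exact le_max_of_le_left (by linarith)
    · haveI : IsEmpty (x ∈ Ω) := ⟨hx⟩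
      rw [Real.iSup_of_isEmpty]
      exact le_max_right _ _
  have step : (⨆ _ : x₀ ∈ Ω, Metric.infDist x₀ (frontier Ω)) ≤ inradius Ω :=
    le_ciSup hBdd x₀
  haveI : Nonempty (x₀ ∈ Ω) := ⟨hx₀⟩
  rw [ciSup_const] at step
  exact lt_of_lt_of_le hpos step

/-- The feasible set in the definition of the Dirichlet eigenvalues. -/
def eigSet (Ω : Set X) (k : ℕ) : Set ℝ :=
  { c : ℝ | ∃ V : Submodule ℝ (X → ℝ), Module.finrank ℝ V = k + 1 ∧
    (∀ f ∈ V, ContDiff ℝ (⊤ : ℕ∞) f ∧ HasCompactSupport f ∧ tsupport f ⊆ Ω) ∧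
    ∀ f ∈ V, f ≠ 0 → rayleighQuotient f ≤ c }

lemma dirichletEigenvalue_eq_sInf (Ω : Set X) (k : ℕ) :
    dirichletEigenvalue Ω k = sInf (eigSet Ω k) := rfl

lemma eigSet_nonneg (Ω : Set X) (k : ℕ) : ∀ c ∈ eigSet Ω k, 0 ≤ c := by
  rintro c ⟨V, hV, _hreg, hray⟩
  have hVne : V ≠ ⊥ := by
    intro h0
    rw [h0, finrank_bot] at hV
    omega
  obtain ⟨f, hfV, hfne⟩ := (Submodule.ne_bot_iff V).1 hVne
  have h1 : 0 ≤ rayleighQuotient f :=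
    div_nonneg (integral_nonneg fun x => by positivity) (integral_nonneg fun x => by positivity)
  exact le_trans h1 (hray f hfV hfne)

lemma dirichletEigenvalue_nonneg (Ω : Set X) (k : ℕ) : 0 ≤ dirichletEigenvalue Ω k := by
  rw [dirichletEigenvalue_eq_sInf]
  exact Real.sInf_nonneg (eigSet_nonneg Ω k)

end EigenAux

section Finiteness
variable {n : ℕ}
local notation "X" => EuclideanSpace ℝ (Fin n)

lemma eig_lt_finite (hn : 1 ≤ n) (Ω : Set X) (hbd : Bornology.IsBounded Ω)
    {Λ s : ℝ} (hΛ0 : 0 < Λ)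
    (hfin : {k : ℕ | dirichletEigenvalue Ω k < Λ}.Finite) :
    {k : ℕ | dirichletEigenvalue Ω k < s}.Finite := by
  obtain ⟨r, hr⟩ := hbd.subset_closedBall 0
  set R : ℝ := max r 1 with hR_def
  have hR : 0 < R := lt_of_lt_of_le one_pos (le_max_right _ _)
  have hΩR : Ω ⊆ Metric.closedBall 0 R :=
    hr.trans (Metric.closedBall_subset_closedBall (le_max_left _ _))
  set M : ℝ := max s 1 with hM_def
  have hM : 0 < M := lt_of_lt_of_le one_pos (le_max_right _ _)
  obtain ⟨K, hK⟩ := weyl_dim_bound hn M R hM hR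
  by_contra hinf
  have hinf' : Set.Infinite {k : ℕ | dirichletEigenvalue Ω k < s} := hinf
  have key : ∀ k : ℕ, dirichletEigenvalue Ω k < s → (eigSet Ω k).Nonempty → k < K := by
    intro k hk hne
    have hbdd : BddBelow (eigSet Ω k) := ⟨0, fun c hc => eigSet_nonneg Ω k c hc⟩
    rw [dirichletEigenvalue_eq_sInf] at hk
    obtain ⟨c, hcmem, hcs⟩ := (csInf_lt_iff hbdd hne).1 hk
    obtain ⟨V, hVrank, hVreg, hVray⟩ := hcmem
    have hcM : c ≤ M := le_trans hcs.le (le_max_left _ _)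
    have h1 : Module.finrank ℝ V ≤ K := by
      apply hK V
      · intro f hf
        exact ⟨(hVreg f hf).1, (hVreg f hf).2.1, (hVreg f hf).2.2.trans hΩR⟩
      · intro f hf
        by_cases hf0 : f = 0
        · subst hf0
          have e0 : (fun x : X => ‖fderiv ℝ (0 : X → ℝ) x‖ ^ 2) = fun _ : X => (0:ℝ) := by
            funext x
            rw [show (0 : X → ℝ) = (fun _ : X => (0:ℝ)) from rfl, fderiv_fun_const]
            simp
          have e1 : (fun x : X => (0 : X → ℝ) x * (0 : X → ℝ) x) = fun _ : X => (0:ℝ) := by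
            funext x; simp
          rw [e0, e1]
          simp
        · obtain ⟨hsm, hcs', hsupp⟩ := hVreg f hf
          have hcont : Continuous f := hsm.continuous
          obtain ⟨x₀, hx₀⟩ := Function.ne_iff.1 hf0
          have hB : 0 < ∫ x : X, (f x) ^ 2 := by
            apply Continuous.integral_pos_of_hasCompactSupport_nonneg_nonzero (hcont.pow 2)
              (by simpa [Function.comp_def, Pi.pow_def] using hcs'.comp_left (g := fun y : ℝ => y ^ 2) (by simp))
              (fun x => sq_nonneg _)
            simpa using hx₀
          have hray := hVray f hf hf0
          rw [rayleighQuotient, div_le_iff₀ hB] at hray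
          have e2 : ∫ x : X, f x * f x = ∫ x : X, (f x) ^ 2 := by
            apply integral_congr_ae; filter_upwards with x using (sq (f x)).symm ▸ by ring
          rw [e2]
          calc (∫ x : X, ‖fderiv ℝ f x‖ ^ 2) ≤ c * ∫ x : X, (f x) ^ 2 := hray
          _ ≤ M * ∫ x : X, (f x) ^ 2 := by nlinarith
    omega
  have hsub : {k : ℕ | dirichletEigenvalue Ω k < s} \ Set.Iio K
      ⊆ {k : ℕ | dirichletEigenvalue Ω k < Λ} := by
    rintro k ⟨hk1, hk2⟩
    simp only [Set.mem_Iio, not_lt] at hk2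
    by_cases hne : (eigSet Ω k).Nonempty
    · exact absurd (key k hk1 hne) (by omega)
    · rw [Set.not_nonempty_iff_eq_empty] at hne
      have h0 : dirichletEigenvalue Ω k = 0 := by
        rw [dirichletEigenvalue_eq_sInf, hne, Real.sInf_empty]
      simp only [Set.mem_setOf_eq, h0]
      exact hΛ0
  exact ((hinf'.diff (Set.finite_Iio K)).mono hsub) hfin

lemma rhs_identity (a b τ Λ σ p q : ℝ) (hτ : 0 < τ) (hΛ : 0 < Λ) :
    a * ((1 + τ) ^ (σ + p) / τ ^ σ) * Λ ^ p - b * ((1 + τ) ^ (σ + q) / τ ^ σ) * Λ ^ q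
      = (a * ((1 + τ) * Λ) ^ (σ + p) - b * ((1 + τ) * Λ) ^ (σ + q)) / (τ ^ σ * Λ ^ σ) := by
  have h1τ : (0:ℝ) < 1 + τ := by linarith
  have e1 : ((1 + τ) * Λ) ^ (σ + p) = (1 + τ) ^ (σ + p) * (Λ ^ σ * Λ ^ p) := by
    rw [Real.mul_rpow h1τ.le hΛ.le, ← Real.rpow_add hΛ]
  have e2 : ((1 + τ) * Λ) ^ (σ + q) = (1 + τ) ^ (σ + q) * (Λ ^ σ * Λ ^ q) := by
    rw [Real.mul_rpow h1τ.le hΛ.le, ← Real.rpow_add hΛ]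
  have hτσ := (Real.rpow_pos_of_pos hτ σ).ne'
  have hΛσ := (Real.rpow_pos_of_pos hΛ σ).ne'
  rw [e1, e2]
  field_simp

end Finiteness


/-- If `C = C(σ,n)` is the constant of the improved Berezin inequality for
convex domains, then for every bounded convex domain `Ω ⊂ ℝⁿ` with inradius `r`, every
`τ > 0` and every `Λ ≥ π²/(4r²)`:
`N(Λ) ≤ L^cl_{σ,n}|Ω|((1+τ)^{σ+n/2}/τ^σ)Λ^{n/2}
  - C L^cl_{σ,n-1}|∂Ω|((1+τ)^{σ+(n-1)/2}/τ^σ)Λ^{(n-1)/2}`. -/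
theorem counting_function_bound (n : ℕ) (hn : 2 ≤ n) (σ : ℝ) (hσ : 3 / 2 ≤ σ)
    (C : ℝ) (hCpos : 0 < C)
    (hC : ∀ Ω : Set (EuclideanSpace ℝ (Fin n)), IsOpen Ω → Convex ℝ Ω →
      Bornology.IsBounded Ω → Ω.Nonempty →
      ∀ Λ : ℝ, π ^ 2 / (4 * inradius Ω ^ 2) < Λ →
        rieszMean σ Ω Λ ≤
          LTconst σ n * (volume Ω).toReal * Λ ^ (σ + (n : ℝ) / 2)
            - C * LTconst σ (n - 1) * surfaceArea (n - 1) (frontier Ω)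
                * Λ ^ (σ + ((n : ℝ) - 1) / 2)) :
    ∀ Ω : Set (EuclideanSpace ℝ (Fin n)), IsOpen Ω → Convex ℝ Ω →
      Bornology.IsBounded Ω → Ω.Nonempty →
      ∀ τ : ℝ, 0 < τ → ∀ Λ : ℝ, π ^ 2 / (4 * inradius Ω ^ 2) ≤ Λ →
        (countingFunction Ω Λ : ℝ) ≤
          LTconst σ n * (volume Ω).toReal * ((1 + τ) ^ (σ + (n : ℝ) / 2) / τ ^ σ)
              * Λ ^ ((n : ℝ) / 2)
            - C * LTconst σ (n - 1) * surfaceArea (n - 1) (frontier Ω)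
                * ((1 + τ) ^ (σ + ((n : ℝ) - 1) / 2) / τ ^ σ) * Λ ^ (((n : ℝ) - 1) / 2) := by
  intro Ω hop hconv hbd hne τ hτ Λ hΛ
  have hn1 : 1 ≤ n := le_trans (by norm_num) hn
  have hr : 0 < inradius Ω := inradius_pos hn1 Ω hop hbd hne
  have hπ : 0 < π := Real.pi_pos
  have hth : 0 < π ^ 2 / (4 * inradius Ω ^ 2) := by positivity
  have hΛ0 : 0 < Λ := lt_of_lt_of_le hth hΛ
  set s : ℝ := (1 + τ) * Λ with hs_def
  have hs0 : 0 < s := by positivity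
  have hsΛ : Λ < s := by nlinarith
  have hsth : π ^ 2 / (4 * inradius Ω ^ 2) < s := lt_of_le_of_lt hΛ hsΛ
  have hCs := hC Ω hop hconv hbd hne s hsth
  set a : ℝ := LTconst σ n * (volume Ω).toReal with ha_def
  set b : ℝ := C * LTconst σ (n - 1) * surfaceArea (n - 1) (frontier Ω) with hb_def
  have hriesz_nonneg : 0 ≤ rieszMean σ Ω s :=
    tsum_nonneg fun k => Real.rpow_nonneg (le_max_right _ _) σ
  have key := rhs_identity a b τ Λ σ ((n : ℝ) / 2) (((n : ℝ) - 1) / 2) hτ hΛ0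
  have hτσ : (0:ℝ) < τ ^ σ := Real.rpow_pos_of_pos hτ σ
  have hΛσ : (0:ℝ) < Λ ^ σ := Real.rpow_pos_of_pos hΛ0 σ
  have hσ0 : 0 ≤ σ := by linarith
  by_cases hfin : {k : ℕ | dirichletEigenvalue Ω k < Λ}.Finite
  · -- finite case: the lifting argument
    have hfin' : {k : ℕ | dirichletEigenvalue Ω k < s}.Finite :=
      eig_lt_finite hn1 Ω hbd hΛ0 hfin
    set g : ℕ → ℝ := fun k => (max (s - dirichletEigenvalue Ω k) 0) ^ σ with hg_def
    have hgnonneg : ∀ k, 0 ≤ g k := fun k => Real.rpow_nonneg (le_max_right _ _) σ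
    have hgz : ∀ k ∉ hfin'.toFinset, g k = 0 := by
      intro k hk
      rw [Set.Finite.mem_toFinset, Set.mem_setOf_eq, not_lt] at hk
      rw [hg_def]
      simp only
      rw [max_eq_right (by linarith), Real.zero_rpow (by linarith)]
    have hsummable : Summable g := summable_of_ne_finset_zero hgz
    have hterm : ∀ k ∈ hfin.toFinset, (τ * Λ) ^ σ ≤ g k := by
      intro k hk
      rw [Set.Finite.mem_toFinset, Set.mem_setOf_eq] at hk
      have h1 : τ * Λ ≤ max (s - dirichletEigenvalue Ω k) 0 :=
        le_max_of_le_left (by rw [hs_def]; nlinarith)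
      exact Real.rpow_le_rpow (by positivity) h1 hσ0
    have hcard : (countingFunction Ω Λ : ℝ) * (τ * Λ) ^ σ ≤ ∑ k ∈ hfin.toFinset, g k := by
      have h1 := Finset.card_nsmul_le_sum hfin.toFinset g ((τ * Λ) ^ σ) hterm
      rw [nsmul_eq_mul] at h1
      have h2 : countingFunction Ω Λ = hfin.toFinset.card := Set.ncard_eq_toFinset_card _ hfin
      rw [h2]
      exact h1
    have hsum : ∑ k ∈ hfin.toFinset, g k ≤ rieszMean σ Ω s :=
      Summable.sum_le_tsum _ (fun k _ => hgnonneg k) hsummable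
    have hmain : (countingFunction Ω Λ : ℝ) * (τ * Λ) ^ σ
        ≤ a * s ^ (σ + (n : ℝ) / 2) - b * s ^ (σ + ((n : ℝ) - 1) / 2) :=
      le_trans hcard (le_trans hsum hCs)
    rw [key, le_div_iff₀ (by positivity)]
    calc (countingFunction Ω Λ : ℝ) * (τ ^ σ * Λ ^ σ)
        = (countingFunction Ω Λ : ℝ) * (τ * Λ) ^ σ := by
          rw [Real.mul_rpow hτ.le hΛ0.le]
    _ ≤ _ := hmain
  · -- infinite case: junk value 0
    have hinf : {k : ℕ | dirichletEigenvalue Ω k < Λ}.Infinite := hfin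
    have h0 : countingFunction Ω Λ = 0 := hinf.ncard
    rw [h0]
    push_cast
    rw [key]
    apply div_nonneg _ (by positivity)
    linarith [le_trans hriesz_nonneg hCs]


end
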